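/- Let P be a finite poset and I ⊆ I' poset ideals such that I' \ I is disconnected, decomposing as a disjoint union A ∪ B of nonempty subsets with no Hasse-diagram edges between A and B. Then I ∪ A and I ∪ B are poset ideals of P, and ρ(I) + ρ(I') = ρ(I ∪ A) + ρ(I ∪ B); consequently conv({ρ(I), ρ(I')}) is not an edge of the order polytope O(P). -/

import Mathlib

/-!
If `I' \ I` splits as `A ∪ B` with no Hasse edge between `A` and `B`, then everything below an
element of `A` is reached from it by a chain of covering relations, which can never jump from
`A` to `B`; hence it stays in `I ∪ A`, and `I ∪ A`, `I ∪ B` are ideals. Their indicator vectors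
have the same sum as those of `I` and `I'`, so the midpoint of `[ρ(I), ρ(I')]` is also the
midpoint of `[ρ(I ∪ A), ρ(I ∪ B)]`. If the segment were a face, `ρ(I ∪ A)` would lie on it; at a
coordinate in `B` this forces `ρ(I ∪ A) = ρ(I)`, which fails on `A`.
-/

open Set

variable {α : Type*} [Fintype α] [PartialOrder α]

/-- A poset ideal (down-set) of a poset. -/
def IsPosetIdeal (I : Set α) : Prop := ∀ ⦃a b : α⦄, a ≤ b → b ∈ I → a ∈ I

/-- The indicator vector of a subset. -/
noncomputable def rho (I : Set α) : α → ℝ := I.indicator 1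

/-- The order polytope of a finite poset. -/
noncomputable def orderPolytope (α : Type*) [Fintype α] [PartialOrder α] : Set (α → ℝ) :=
  convexHull ℝ {x | ∃ I : Set α, IsPosetIdeal I ∧ x = rho I}

/-- A subset of a poset is connected if the induced subgraph of the Hasse diagram is connected. -/
def ConnectedIn (S : Set α) : Prop := ((SimpleGraph.hasse α).induce S).Connected

/-- `conv {v, w}` is an edge (1-dimensional face) of the polytope `P`. -/
def IsEdgeOf (P : Set (α → ℝ)) (v w : α → ℝ) : Prop :=
  v ≠ w ∧ IsExtreme ℝ P (segment ℝ v w)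

section Order

variable {β : Type*} [PartialOrder β]

theorem isPosetIdeal_iff_isLowerSet {s : Set β} : IsPosetIdeal s ↔ IsLowerSet s :=
  ⟨fun h _ _ hab hb => h hab hb, fun h _ _ hab hb => h hab hb⟩

theorem IsLowerSet.union_of_forall_not_hasse_adj [IsStronglyAtomic β] [WellFoundedGT β]
    {s t X Y : Set β} (hs : IsLowerSet s) (ht : IsLowerSet t) (hXY : X ∪ Y = t \ s)
    (hadj : ∀ x ∈ X, ∀ y ∈ Y, ¬ (SimpleGraph.hasse β).Adj x y) : IsLowerSet (s ∪ X) := by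
  have hXt : X ⊆ t := fun x hx => (hXY ▸ Or.inl hx : x ∈ t \ s).1
  suffices h : ∀ a b, a ≤ b → b ∈ X → a ∈ s ∪ X by
    rintro b a hab (hb | hb)
    · exact Or.inl (hs hab hb)
    · exact h a b hab hb
  intro a
  induction a using WellFoundedGT.induction with
  | _ a ih =>
    intro b hab hb
    obtain rfl | hlt := hab.eq_or_lt
    · exact Or.inr hb
    obtain ⟨c, hac, hcb⟩ := exists_covBy_le_of_lt hlt
    obtain hc | hc := ih c hac.lt b hcb hb
    · exact Or.inl (hs hac.le hc)
    by_cases ha : a ∈ s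
    · exact Or.inl ha
    have ha' : a ∈ X ∪ Y := hXY ▸ ⟨ht hac.le (hXt hc), ha⟩
    exact Or.inr <| ha'.resolve_right fun haY =>
      hadj c hc a haY (SimpleGraph.hasse_adj.mpr (Or.inr hac))

end Order

section Convex

variable {𝕜 E : Type*}

theorem IsExtreme.mem_segment_of_add_eq [Field 𝕜] [LinearOrder 𝕜] [IsStrictOrderedRing 𝕜]
    [AddCommGroup E] [Module 𝕜 E] {A : Set E} {v w x y : E}
    (h : IsExtreme 𝕜 A (segment 𝕜 v w)) (hx : x ∈ A) (hy : y ∈ A) (hxy : x + y = v + w) :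
    x ∈ segment 𝕜 v w := by
  refine h.left_mem_of_mem_openSegment hx hy
    ⟨1 / 2, 1 / 2, by positivity, by positivity, add_halves 1, rfl⟩ ?_
  refine ⟨1 / 2, 1 / 2, by positivity, by positivity, add_halves 1, ?_⟩
  rw [← smul_add, hxy, smul_add]

theorem eq_left_of_mem_segment_of_apply_eq {ι : Type*} [CommRing 𝕜] [PartialOrder 𝕜]
    [NoZeroDivisors 𝕜] {v w x : ι → 𝕜} (hx : x ∈ segment 𝕜 v w) {i : ι} (hvw : v i ≠ w i)
    (hxi : x i = v i) : x = v := by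
  obtain ⟨a, b, -, -, hab, rfl⟩ := hx
  obtain rfl : a = 1 - b := eq_sub_of_add_eq hab
  have hb : b * (w i - v i) = 0 := by
    simp only [Pi.add_apply, Pi.smul_apply, smul_eq_mul] at hxi
    linear_combination hxi
  obtain rfl : b = 0 := (mul_eq_zero.mp hb).resolve_right (sub_ne_zero.mpr hvw.symm)
  simp

end Convex

section Indicator

variable {ι : Type*} {I I' A B : Set ι}

theorem rho_add_rho_of_union_eq_diff (hsub : I ⊆ I') (hdisj : Disjoint A B)
    (hunion : A ∪ B = I' \ I) : rho I + rho I' = rho (I ∪ A) + rho (I ∪ B) := by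
  have hsup : (I ∪ A) ∪ (I ∪ B) = I' := by
    rw [← union_union_distrib_left, hunion, union_sdiff_cancel hsub]
  have hinf : (I ∪ A) ∩ (I ∪ B) = I := by
    rw [← union_inter_distrib_left, hdisj.inter_eq, union_empty]
  calc rho I + rho I' = rho ((I ∪ A) ∪ (I ∪ B)) + rho ((I ∪ A) ∩ (I ∪ B)) := by
        rw [hsup, hinf, add_comm]
    _ = rho (I ∪ A) + rho (I ∪ B) := indicator_union_add_inter _ _ _

end Indicator

theorem rho_mem_orderPolytope {I : Set α} (hI : IsLowerSet I) : rho I ∈ orderPolytope α :=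
  subset_convexHull ℝ _ ⟨I, isPosetIdeal_iff_isLowerSet.mpr hI, rfl⟩

theorem disconnected_not_edge (I I' A B : Set α)
    (hI : IsPosetIdeal I) (hI' : IsPosetIdeal I') (hsub : I ⊆ I')
    (hA : A.Nonempty) (hB : B.Nonempty) (hdisj : Disjoint A B) (hunion : A ∪ B = I' \ I)
    (hnoedge : ∀ a ∈ A, ∀ b ∈ B, ¬ (SimpleGraph.hasse α).Adj a b) :
    IsPosetIdeal (I ∪ A) ∧ IsPosetIdeal (I ∪ B) ∧
      rho I + rho I' = rho (I ∪ A) + rho (I ∪ B) ∧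
      ¬ IsEdgeOf (orderPolytope α) (rho I) (rho I') := by
  simp only [isPosetIdeal_iff_isLowerSet] at hI hI' ⊢
  have hIA : IsLowerSet (I ∪ A) := hI.union_of_forall_not_hasse_adj hI' hunion hnoedge
  have hIB : IsLowerSet (I ∪ B) :=
    hI.union_of_forall_not_hasse_adj hI' (union_comm B A ▸ hunion)
      fun b hb a ha hba => hnoedge a ha b hb hba.symm
  have hsum := rho_add_rho_of_union_eq_diff hsub hdisj hunion
  refine ⟨hIA, hIB, hsum, fun ⟨_, hext⟩ => ?_⟩
  obtain ⟨a, ha⟩ := hA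
  obtain ⟨b, hb⟩ := hB
  have ha' : a ∈ I' \ I := hunion ▸ Or.inl ha
  have hb' : b ∈ I' \ I := hunion ▸ Or.inr hb
  have hbA : b ∉ A := fun hbA => hdisj.ne_of_mem hbA hb rfl
  have hmem := hext.mem_segment_of_add_eq (rho_mem_orderPolytope hIA)
    (rho_mem_orderPolytope hIB) hsum.symm
  have heq := eq_left_of_mem_segment_of_apply_eq hmem (i := b)
    (by simp [rho, hb'.1, hb'.2]) (by simp [rho, hb'.2, hbA])
  simpa [rho, ha, ha'.2] using congrFun heq a
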